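/- Let D ≥ 2 be an integer, let α_D be the unique positive real root of z^D − z^{D−1} − ⋯ − z − 1, and let d_D = (α_D − 1)/(2 + (D+1)(α_D − 2)). Then the number |C_{t,D}| of compositions of t with all parts at most D satisfies: |C_{t,D}| / α_D^t tends to d_D as the integer t tends to infinity. -/

import Mathlib

open Finset Filter

/-- Number of compositions of `t` all of whose parts are at most `D`. -/
def compCountLe (t D : ℕ) : ℕ :=
  (Finset.univ.filter (fun c : Composition t => ∀ p ∈ c.blocks, p ≤ D)).card

/-- Number of compositions of `t` with exactly `n` parts greater than `D`
(all other parts being at most `D`). -/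
def compCountExact (t n D : ℕ) : ℕ :=
  (Finset.univ.filter (fun c : Composition t =>
    c.blocks.countP (fun p => D < p) = n)).card
lemma cons_headI_tail {l : List ℕ} (h : l ≠ []) : l.headI :: l.tail = l := by
  cases l with
  | nil => exact absurd rfl h
  | cons a l => rfl
lemma headI_mem' {l : List ℕ} (h : l ≠ []) : l.headI ∈ l := by
  cases l with
  | nil => exact absurd rfl h
  | cons a l => exact List.mem_cons_self
lemma comp_blocks_ne_nil {t : ℕ} (ht : 1 ≤ t) (c : Composition t) : c.blocks ≠ [] := by
  intro h
  have := c.blocks_sum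
  rw [h] at this
  simp at this
  omega
lemma compCountLe_zero (D : ℕ) : compCountLe 0 D = 1 := by
  rw [compCountLe]
  have : ∀ c : Composition 0, (∀ p ∈ c.blocks, p ≤ D) := by
    intro c p hp
    have h1 := c.blocks_pos hp
    have h2 := c.blocks_sum
    have := List.single_le_sum (fun x hx => Nat.zero_le x) p hp
    omega
  rw [Finset.filter_true_of_mem (fun c _ => this c)]
  simp [Finset.card_univ, composition_card]
lemma compCountLe_rec (D t : ℕ) (ht : 1 ≤ t) :
    compCountLe t D = ∑ k ∈ Icc 1 (min t D), compCountLe (t - k) D := by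
  rw [compCountLe]
  rw [Finset.card_eq_sum_card_fiberwise
    (f := fun c : Composition t => c.blocks.headI) (t := Icc 1 (min t D)) ?_]
  · apply Finset.sum_congr rfl
    intro k hk
    simp only [Finset.mem_Icc, le_min_iff] at hk
    obtain ⟨hk1, hkt, hkD⟩ := hk
    rw [compCountLe]
    refine Finset.card_bij'
      (fun c hc => (⟨c.blocks.tail,
        fun hp => c.blocks_pos (List.mem_of_mem_tail hp),
        by
          simp only [Finset.mem_filter, Finset.mem_univ, true_and] at hc
          have hne := comp_blocks_ne_nil ht c
          have := c.blocks_sum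
          conv_lhs at this => rw [← cons_headI_tail hne]
          rw [List.sum_cons, hc.2] at this
          omega⟩ : Composition (t - k)))
      (fun c' _ => (⟨k :: c'.blocks,
        fun hp => by
          rcases List.mem_cons.1 hp with h | h
          · omega
          · exact c'.blocks_pos h,
        by rw [List.sum_cons, c'.blocks_sum]; omega⟩ : Composition t))
      ?_ ?_ ?_ ?_
    · intro a ha
      simp only [Finset.mem_filter, Finset.mem_univ, true_and] at ha ⊢
      intro p hp
      exact ha.1 p (List.mem_of_mem_tail hp)
    · intro b hb
      simp only [Finset.mem_filter, Finset.mem_univ, true_and] at hb ⊢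
      constructor
      · intro p hp
        rcases List.mem_cons.1 hp with h | h
        · omega
        · exact hb p h
      · rfl
    · intro a ha
      have ha' := ha
      simp only [Finset.mem_filter, Finset.mem_univ, true_and] at ha'
      apply Composition.ext
      simp only
      rw [← ha'.2]
      exact cons_headI_tail (comp_blocks_ne_nil ht a)
    · intro b hb
      apply Composition.ext
      simp only [List.tail_cons]
  · intro c hc
    simp only [Finset.mem_coe, Finset.mem_filter, Finset.mem_univ, true_and] at hc
    have hne := comp_blocks_ne_nil ht c
    have h1 : 0 < c.blocks.headI := c.blocks_pos (headI_mem' hne)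
    have hD : c.blocks.headI ≤ D := hc _ (headI_mem' hne)
    have hsum : c.blocks.headI ≤ t := by
      have := c.blocks_sum
      have h2 := List.single_le_sum (fun x _ => Nat.zero_le x) _ (headI_mem' hne)
      omega
    simp only [Finset.mem_coe, Finset.mem_Icc, le_min_iff]
    omega
lemma alpha_gt_one {D : ℕ} {α : ℝ} (hD : 2 ≤ D) (hα : 0 < α)
    (hroot : α ^ D = ∑ i ∈ Finset.range D, α ^ i) : 1 < α := by
  by_contra h
  push_neg at h
  have h1 : α ^ D ≤ 1 := pow_le_one₀ hα.le h
  have h2 : (1 : ℝ) + α ≤ ∑ i ∈ Finset.range D, α ^ i := by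
    have : ∑ i ∈ Finset.range 2, α ^ i ≤ ∑ i ∈ Finset.range D, α ^ i := by
      apply Finset.sum_le_sum_of_subset_of_nonneg
      · exact Finset.range_subset_range.2 hD
      · intro i _ _; positivity
    simpa [Finset.sum_range_succ] using this
  linarith
lemma psum_eq_one {D : ℕ} {α : ℝ} (hD : 2 ≤ D) (hα : 0 < α)
    (hroot : α ^ D = ∑ i ∈ Finset.range D, α ^ i) :
    ∑ k ∈ Icc 1 D, α⁻¹ ^ k = 1 := by
  have hα0 : α ≠ 0 := ne_of_gt hα
  have key : ∀ k ∈ Icc 1 D, α⁻¹ ^ k = α ^ (D - k) * α⁻¹ ^ D := by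
    intro k hk
    simp only [mem_Icc] at hk
    conv_rhs => rw [show α⁻¹ ^ D = α⁻¹ ^ (D - k) * α⁻¹ ^ k by rw [← pow_add]; congr 1; omega]
    rw [← mul_assoc, ← mul_pow, mul_inv_cancel₀ hα0, one_pow, one_mul]
  rw [Finset.sum_congr rfl key, ← Finset.sum_mul]
  have : ∑ k ∈ Icc 1 D, α ^ (D - k) = ∑ i ∈ Finset.range D, α ^ i := by
    rw [← Finset.Ico_add_one_right_eq_Icc, Finset.sum_Ico_eq_sum_range]
    rw [← Finset.sum_range_reflect]
    apply Finset.sum_congr rfl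
    intro i hi
    simp only [Finset.mem_range] at hi
    congr 1
    omega
  rw [this, ← hroot, inv_pow, mul_inv_cancel₀ (by positivity)]
noncomputable def gseq (D : ℕ) (α : ℝ) (n : ℕ) : ℝ :=
  if n < D then 0 else (compCountLe (n - D) D : ℝ) * α⁻¹ ^ (n - D)
lemma grec {D : ℕ} {α : ℝ} (hα : 0 < α) {n : ℕ} (hn : D + 1 ≤ n) :
    gseq D α n = ∑ k ∈ Icc 1 D, α⁻¹ ^ k * gseq D α (n - k) := by
  set t := n - D with htdef
  have ht : 1 ≤ t := by omega
  have hn' : n = D + t := by omega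
  have hsub : Icc 1 (min t D) ⊆ Icc 1 D := Finset.Icc_subset_Icc_right (min_le_right _ _)
  rw [← Finset.sum_subset hsub ?vanish]
  case vanish =>
    intro k hk hk'
    simp only [mem_Icc, le_min_iff, not_and, not_le] at hk hk'
    have htk : t < k := by omega
    have : n - k < D := by omega
    rw [gseq, if_pos this, mul_zero]
  have hstep : ∀ k ∈ Icc 1 (min t D),
      α⁻¹ ^ k * gseq D α (n - k) = (compCountLe (t - k) D : ℝ) * α⁻¹ ^ t := by
    intro k hk
    simp only [mem_Icc, le_min_iff] at hk
    have h1 : ¬ (n - k < D) := by omega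
    have h2 : n - k - D = t - k := by omega
    rw [gseq, if_neg h1, h2, ← mul_assoc, mul_comm (α⁻¹ ^ k), mul_assoc, ← pow_add]
    congr 2
    omega
  rw [Finset.sum_congr rfl hstep, ← Finset.sum_mul, gseq, if_neg (by omega : ¬ n < D),
    ← htdef]
  congr 1
  rw [compCountLe_rec D t ht]
  push_cast
  rfl
noncomputable def qcoef (D : ℕ) (α : ℝ) (j : ℕ) : ℝ := ∑ k ∈ Icc (j+1) D, α⁻¹ ^ k
lemma qcoef_zero {D : ℕ} {α : ℝ} (hD : 2 ≤ D) (hα : 0 < α)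
    (hroot : α ^ D = ∑ i ∈ Finset.range D, α ^ i) : qcoef D α 0 = 1 := by
  rw [qcoef]; exact psum_eq_one hD hα hroot
lemma qcoef_split {D : ℕ} {α : ℝ} (j : ℕ) (hj : j < D) :
    qcoef D α j = α⁻¹ ^ (j+1) + qcoef D α (j+1) := by
  rw [qcoef, qcoef, show Icc (j+1) D = insert (j+1) (Icc (j+2) D) by
    ext x; simp only [Finset.mem_Icc, Finset.mem_insert]; omega]
  rw [Finset.sum_insert (by simp only [Finset.mem_Icc]; omega)]
lemma qcoef_top {D : ℕ} {α : ℝ} : qcoef D α D = 0 := by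
  rw [qcoef, Finset.Icc_eq_empty (by omega), Finset.sum_empty]
lemma yconst {D : ℕ} {α : ℝ} (hD : 2 ≤ D) (hα : 0 < α)
    (hroot : α ^ D = ∑ i ∈ Finset.range D, α ^ i) :
    ∀ n, D ≤ n → ∑ j ∈ range D, qcoef D α j * gseq D α (n - j) = 1 := by
  intro n hn
  induction n, hn using Nat.le_induction with
  | base =>
    rw [Finset.sum_eq_single 0]
    · rw [qcoef_zero hD hα hroot, Nat.sub_zero, gseq, if_neg (by omega), Nat.sub_self,
        compCountLe_zero, pow_zero]
      norm_num
    · intro j _ hj0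
      have : D - j < D := by omega
      rw [gseq, if_pos this, mul_zero]
    · intro h
      exact absurd (Finset.mem_range.2 (by omega)) h
  | succ n hn ih
  =>
    obtain ⟨E, rfl⟩ : ∃ E, D = E + 1 := ⟨D - 1, by omega⟩
    have h1 : ∑ j ∈ range (E+1), qcoef (E+1) α j * gseq (E+1) α (n + 1 - j)
        = (∑ j ∈ range E, qcoef (E+1) α (j+1) * gseq (E+1) α (n - j)) + gseq (E+1) α (n+1) := by
      rw [Finset.sum_range_succ']
      congr 1
      · apply Finset.sum_congr rfl
        intro j _
        congr 2
        omega
      · rw [qcoef_zero hD hα hroot, Nat.sub_zero, one_mul]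
    have h2 : gseq (E+1) α (n+1) = ∑ i ∈ range (E+1), α⁻¹ ^ (1 + i) * gseq (E+1) α (n - i) := by
      rw [grec hα (by omega), ← Finset.Ico_add_one_right_eq_Icc, Finset.sum_Ico_eq_sum_range]
      apply Finset.sum_congr rfl
      intro i _
      congr 2
      omega
    have h3 : ∑ j ∈ range (E+1), qcoef (E+1) α j * gseq (E+1) α (n - j)
        = (∑ j ∈ range E, qcoef (E+1) α (j+1) * gseq (E+1) α (n - j))
          + ∑ i ∈ range (E+1), α⁻¹ ^ (1 + i) * gseq (E+1) α (n - i) := by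
      have hsp : ∀ j ∈ range (E+1), qcoef (E+1) α j * gseq (E+1) α (n - j)
          = α⁻¹ ^ (1 + j) * gseq (E+1) α (n - j) + qcoef (E+1) α (j+1) * gseq (E+1) α (n - j) := by
        intro j hj
        simp only [Finset.mem_range] at hj
        rw [show qcoef (E+1) α j = α⁻¹ ^ (j+1) + qcoef (E+1) α (j+1) from
          qcoef_split j (by omega), add_mul, Nat.add_comm j 1]
      rw [Finset.sum_congr rfl hsp, Finset.sum_add_distrib]
      rw [Finset.sum_range_succ (fun j => qcoef (E+1) α (j+1) * gseq (E+1) α (n - j)),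
        qcoef_top, zero_mul, add_zero, add_comm]
    rw [h1, h2, ← h3]
    exact ih
noncomputable def Mwin (D : ℕ) (hD : 2 ≤ D) (α : ℝ) (t : ℕ) : ℝ :=
  (range D).sup' ⟨0, by simp; omega⟩ (fun j => gseq D α (t + j))

noncomputable def mwin (D : ℕ) (hD : 2 ≤ D) (α : ℝ) (t : ℕ) : ℝ :=
  (range D).inf' ⟨0, by simp; omega⟩ (fun j => gseq D α (t + j))

section Bounds

variable {D : ℕ} {α : ℝ} (hD : 2 ≤ D) (hα : 0 < α)
  (hroot : α ^ D = ∑ i ∈ Finset.range D, α ^ i)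

include hD hα hroot

lemma window_bounds : ∀ t, 1 ≤ t → ∀ s, t ≤ s →
    mwin D hD α t ≤ gseq D α s ∧ gseq D α s ≤ Mwin D hD α t := by
  intro t ht s
  induction s using Nat.strong_induction_on with
  | _ s ih =>
    intro hts
    by_cases hcase : s < t + D
    · obtain ⟨j, rfl⟩ : ∃ j, s = t + j := ⟨s - t, by omega⟩
      have hj : j ∈ range D := Finset.mem_range.2 (by omega)
      exact ⟨Finset.inf'_le (fun j => gseq D α (t + j)) hj,
        Finset.le_sup' (fun j => gseq D α (t + j)) hj⟩
    · push_neg at hcase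
      have hrec := grec (D := D) hα (n := s) (by omega)
      have hterm : ∀ k ∈ Icc 1 D, t ≤ s - k ∧ s - k < s := by
        intro k hk
        simp only [mem_Icc] at hk
        omega
      constructor
      · rw [hrec]
        calc mwin D hD α t = (∑ k ∈ Icc 1 D, α⁻¹ ^ k) * mwin D hD α t := by
              rw [psum_eq_one hD hα hroot, one_mul]
          _ = ∑ k ∈ Icc 1 D, α⁻¹ ^ k * mwin D hD α t := by rw [Finset.sum_mul]
          _ ≤ ∑ k ∈ Icc 1 D, α⁻¹ ^ k * gseq D α (s - k) := by
              apply Finset.sum_le_sum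
              intro k hk
              exact mul_le_mul_of_nonneg_left
                ((ih (s - k) (hterm k hk).2 (hterm k hk).1).1) (by positivity)
      · rw [hrec]
        calc ∑ k ∈ Icc 1 D, α⁻¹ ^ k * gseq D α (s - k)
            ≤ ∑ k ∈ Icc 1 D, α⁻¹ ^ k * Mwin D hD α t := by
              apply Finset.sum_le_sum
              intro k hk
              exact mul_le_mul_of_nonneg_left
                ((ih (s - k) (hterm k hk).2 (hterm k hk).1).2) (by positivity)
          _ = (∑ k ∈ Icc 1 D, α⁻¹ ^ k) * Mwin D hD α t := by rw [Finset.sum_mul]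
          _ = Mwin D hD α t := by rw [psum_eq_one hD hα hroot, one_mul]

lemma mwin_le_Mwin (t : ℕ) (ht : 1 ≤ t) : mwin D hD α t ≤ Mwin D hD α t :=
  le_trans (window_bounds hD hα hroot t ht t le_rfl).1
    (window_bounds hD hα hroot t ht t le_rfl).2

lemma Mwin_anti {t t' : ℕ} (ht : 1 ≤ t) (htt' : t ≤ t') :
    Mwin D hD α t' ≤ Mwin D hD α t := by
  apply Finset.sup'_le
  intro j _
  exact (window_bounds hD hα hroot t ht (t' + j) (by omega)).2

lemma mwin_mono {t t' : ℕ} (ht : 1 ≤ t) (htt' : t ≤ t') :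
    mwin D hD α t ≤ mwin D hD α t' := by
  apply Finset.le_inf'
  intro j _
  exact (window_bounds hD hα hroot t ht (t' + j) (by omega)).1

lemma glow : ∀ t, 1 ≤ t → ∀ r, mwin D hD α t + α⁻¹ ^ (D + r) * (Mwin D hD α t - mwin D hD α t)
    ≤ gseq D α (t + D + r) := by
  intro t ht
  have hβpos : (0:ℝ) < α⁻¹ := by positivity
  have hβle : α⁻¹ ≤ 1 := by
    have := alpha_gt_one hD hα hroot
    rw [inv_le_one_iff₀]; right; linarith
  obtain ⟨j0, hj0mem, hj0⟩ := Finset.exists_mem_eq_sup'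
    (⟨0, by simp; omega⟩ : (range D).Nonempty) (fun j => gseq D α (t + j))
  simp only [Finset.mem_range] at hj0mem
  have key : ∀ s, D + 1 ≤ s → ∀ k ∈ Icc 1 D, t ≤ s - k →
      (∀ k' ∈ Icc 1 D, t ≤ s - k') →
      mwin D hD α t + α⁻¹ ^ k * (gseq D α (s - k) - mwin D hD α t) ≤ gseq D α s := by
    intro s hs k hk hsk hall
    rw [grec hα hs]
    have h1 : ∑ k' ∈ Icc 1 D, α⁻¹ ^ k' * mwin D hD α t = mwin D hD α t := by
      rw [← Finset.sum_mul, psum_eq_one hD hα hroot, one_mul]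
    have h2 : α⁻¹ ^ k * (gseq D α (s - k) - mwin D hD α t)
        ≤ ∑ k' ∈ Icc 1 D, α⁻¹ ^ k' * (gseq D α (s - k') - mwin D hD α t) := by
      apply Finset.single_le_sum (f := fun k' => α⁻¹ ^ k' * (gseq D α (s - k') - mwin D hD α t))
        _ hk
      intro k' hk'
      have := (window_bounds hD hα hroot t ht (s - k') (hall k' hk')).1
      have : (0:ℝ) ≤ gseq D α (s - k') - mwin D hD α t := by linarith
      positivity
    have h3 : ∑ k' ∈ Icc 1 D, α⁻¹ ^ k' * (gseq D α (s - k') - mwin D hD α t)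
        = (∑ k' ∈ Icc 1 D, α⁻¹ ^ k' * gseq D α (s - k')) - mwin D hD α t := by
      calc ∑ k' ∈ Icc 1 D, α⁻¹ ^ k' * (gseq D α (s - k') - mwin D hD α t)
          = ∑ k' ∈ Icc 1 D,
              (α⁻¹ ^ k' * gseq D α (s - k') - α⁻¹ ^ k' * mwin D hD α t) := by
            apply Finset.sum_congr rfl; intro k' _; ring
        _ = (∑ k' ∈ Icc 1 D, α⁻¹ ^ k' * gseq D α (s - k'))
              - ∑ k' ∈ Icc 1 D, α⁻¹ ^ k' * mwin D hD α t := Finset.sum_sub_distrib _ _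
        _ = (∑ k' ∈ Icc 1 D, α⁻¹ ^ k' * gseq D α (s - k')) - mwin D hD α t := by rw [h1]
    linarith
  intro r
  induction r with
  | zero =>
    have hMm : gseq D α (t + j0) - mwin D hD α t = Mwin D hD α t - mwin D hD α t := by
      rw [show Mwin D hD α t = gseq D α (t + j0) from hj0]
    have hk : D - j0 ∈ Icc 1 D := by simp only [mem_Icc]; omega
    have := key (t + D) (by omega) (D - j0) hk (by omega)
      (fun k' hk' => by simp only [mem_Icc] at hk'; omega)
    rw [show t + D - (D - j0) = t + j0 by omega, hMm] at this
    have hpow : α⁻¹ ^ D ≤ α⁻¹ ^ (D - j0) := pow_le_pow_of_le_one hβpos.le hβle (by omega)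
    have hΔ : 0 ≤ Mwin D hD α t - mwin D hD α t := by
      have := mwin_le_Mwin hD hα hroot t ht; linarith
    have : α⁻¹ ^ (D + 0) * (Mwin D hD α t - mwin D hD α t)
        ≤ α⁻¹ ^ (D - j0) * (Mwin D hD α t - mwin D hD α t) := by
      apply mul_le_mul_of_nonneg_right _ hΔ
      simpa using hpow
    simp only [Nat.add_zero] at this ⊢
    linarith
  | succ r ihr =>
    have hk : (1:ℕ) ∈ Icc 1 D := by simp only [mem_Icc]; omega
    have := key (t + D + r + 1) (by omega) 1 hk (by omega)
      (fun k' hk' => by simp only [mem_Icc] at hk'; omega)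
    rw [show t + D + r + 1 - 1 = t + D + r by omega] at this
    have hΔ : 0 ≤ Mwin D hD α t - mwin D hD α t := by
      have := mwin_le_Mwin hD hα hroot t ht; linarith
    have hstep : α⁻¹ ^ (D + (r + 1)) * (Mwin D hD α t - mwin D hD α t)
        ≤ α⁻¹ ^ 1 * (gseq D α (t + D + r) - mwin D hD α t) := by
      have h4 : α⁻¹ ^ (D + r) * (Mwin D hD α t - mwin D hD α t)
          ≤ gseq D α (t + D + r) - mwin D hD α t := by linarith
      calc α⁻¹ ^ (D + (r + 1)) * (Mwin D hD α t - mwin D hD α t)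
          = α⁻¹ ^ 1 * (α⁻¹ ^ (D + r) * (Mwin D hD α t - mwin D hD α t)) := by
            rw [← mul_assoc, ← pow_add]; ring_nf
        _ ≤ α⁻¹ ^ 1 * (gseq D α (t + D + r) - mwin D hD α t) := by
            apply mul_le_mul_of_nonneg_left h4 (by positivity)
    have : t + D + (r + 1) = t + D + r + 1 := by omega
    rw [this]
    linarith

lemma contraction : ∀ t, 1 ≤ t →
    Mwin D hD α (t + D) - mwin D hD α (t + D)
      ≤ (1 - α⁻¹ ^ (2 * D - 1)) * (Mwin D hD α t - mwin D hD α t) := by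
  intro t ht
  have hβpos : (0:ℝ) < α⁻¹ := by positivity
  have hβle : α⁻¹ ≤ 1 := by
    have := alpha_gt_one hD hα hroot
    rw [inv_le_one_iff₀]; right; linarith
  have hΔ : 0 ≤ Mwin D hD α t - mwin D hD α t := by
    have := mwin_le_Mwin hD hα hroot t ht; linarith
  have hm : mwin D hD α t + α⁻¹ ^ (2 * D - 1) * (Mwin D hD α t - mwin D hD α t)
      ≤ mwin D hD α (t + D) := by
    apply Finset.le_inf'
    intro j hj
    simp only [Finset.mem_range] at hj
    have h1 := glow hD hα hroot t ht j
    have hpow : α⁻¹ ^ (2 * D - 1) ≤ α⁻¹ ^ (D + j) :=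
      pow_le_pow_of_le_one hβpos.le hβle (by omega)
    have : α⁻¹ ^ (2 * D - 1) * (Mwin D hD α t - mwin D hD α t)
        ≤ α⁻¹ ^ (D + j) * (Mwin D hD α t - mwin D hD α t) :=
      mul_le_mul_of_nonneg_right hpow hΔ
    rw [show t + D + j = t + (D + j) by omega] at h1
    have : t + (D + j) = t + D + j := by omega
    rw [this] at h1
    linarith
  have hM : Mwin D hD α (t + D) ≤ Mwin D hD α t := Mwin_anti hD hα hroot ht (by omega)
  have expand : (1 - α⁻¹ ^ (2 * D - 1)) * (Mwin D hD α t - mwin D hD α t)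
      = (Mwin D hD α t - mwin D hD α t)
        - α⁻¹ ^ (2 * D - 1) * (Mwin D hD α t - mwin D hD α t) := by ring
  rw [expand]
  linarith [hm, hM]

end Bounds
lemma alpha_key {D : ℕ} {α : ℝ} (hα : 0 < α)
    (hroot : α ^ D = ∑ i ∈ Finset.range D, α ^ i) :
    α ^ (D + 1) = 2 * α ^ D - 1 := by
  have h := geom_sum_mul α D
  rw [← hroot] at h
  have : α ^ (D + 1) = α ^ D * α := by rw [pow_succ]
  nlinarith [h]
lemma qcoef_closed {D : ℕ} {α : ℝ} (hα : 0 < α) {j : ℕ} (hj : j < D) :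
    (α - 1) * qcoef D α j = α⁻¹ ^ j - α⁻¹ ^ D := by
  have hα0 : α ≠ 0 := ne_of_gt hα
  rw [qcoef, Finset.mul_sum, ← Finset.Ico_add_one_right_eq_Icc, Finset.sum_Ico_eq_sum_range]
  have hterm : ∀ i, (α - 1) * α⁻¹ ^ (j + 1 + i) = α⁻¹ ^ (j + i) - α⁻¹ ^ (j + i + 1) := by
    intro i
    have h1 : α⁻¹ ^ (j + i) = α * α⁻¹ ^ (j + i + 1) := by
      rw [pow_succ, ← mul_assoc, mul_comm α, mul_assoc, mul_inv_cancel₀ hα0, mul_one]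
    rw [show j + 1 + i = j + i + 1 by omega, h1]
    ring
  calc ∑ i ∈ range (D + 1 - (j + 1)), (α - 1) * α⁻¹ ^ (j + 1 + i)
      = ∑ i ∈ range (D - j), (α⁻¹ ^ (j + i) - α⁻¹ ^ (j + (i + 1))) := by
        rw [show D + 1 - (j + 1) = D - j by omega]
        apply Finset.sum_congr rfl
        intro i _
        rw [hterm i, show j + (i+1) = j + i + 1 by omega]
    _ = α⁻¹ ^ (j + 0) - α⁻¹ ^ (j + (D - j)) := Finset.sum_range_sub' (fun i => α⁻¹ ^ (j + i)) _
    _ = α⁻¹ ^ j - α⁻¹ ^ D := by rw [Nat.add_zero, show j + (D - j) = D by omega]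
lemma mu_identity {D : ℕ} {α : ℝ} (hD : 2 ≤ D) (hα : 0 < α)
    (hroot : α ^ D = ∑ i ∈ Finset.range D, α ^ i) :
    (α - 1) * (∑ j ∈ range D, qcoef D α j) = 2 + (D + 1) * (α - 2) := by
  have hα0 : α ≠ 0 := ne_of_gt hα
  have hkey := alpha_key hα hroot
  have hsum : (α - 1) * (∑ j ∈ range D, qcoef D α j)
      = (∑ j ∈ range D, α⁻¹ ^ j) - D * α⁻¹ ^ D := by
    rw [Finset.mul_sum]
    rw [Finset.sum_congr rfl (fun j hj => qcoef_closed hα (Finset.mem_range.1 hj)),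
      Finset.sum_sub_distrib, Finset.sum_const, Finset.card_range, nsmul_eq_mul]
  have hAD : α ^ D ≠ 0 := pow_ne_zero _ hα0
  apply mul_left_cancel₀ hAD
  rw [hsum]
  have h1 : α ^ D * ((∑ j ∈ range D, α⁻¹ ^ j) - D * α⁻¹ ^ D)
      = (∑ j ∈ range D, α ^ (D - j)) - D := by
    rw [mul_sub, Finset.mul_sum]
    congr 1
    · apply Finset.sum_congr rfl
      intro j hj
      simp only [Finset.mem_range] at hj
      rw [inv_pow, show α ^ (D - j) = α ^ D * (α ^ j)⁻¹ by
        field_simp; rw [← pow_add]; congr 1; omega]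
    · rw [inv_pow, ← mul_assoc, mul_comm (α ^ D), mul_assoc,
        mul_inv_cancel₀ hAD, mul_one]
  have h2 : ∑ j ∈ range D, α ^ (D - j) = α * α ^ D := by
    rw [← Finset.sum_range_reflect (fun j => α ^ (D - j)) D]
    calc ∑ j ∈ range D, α ^ (D - (D - 1 - j))
        = ∑ j ∈ range D, α ^ (j + 1) := by
          apply Finset.sum_congr rfl
          intro j hj
          simp only [Finset.mem_range] at hj
          congr 1
          omega
      _ = α * ∑ j ∈ range D, α ^ j := by
          rw [Finset.mul_sum]
          apply Finset.sum_congr rfl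
          intro j _
          rw [pow_succ]
          ring
      _ = α * α ^ D := by rw [← hroot]
  rw [h1, h2]
  have : α * α ^ D = α ^ (D + 1) := by rw [pow_succ]; ring
  rw [this]
  push_cast
  linear_combination (-(D:ℝ)) * hkey

/-- For `D ≥ 2`, with `α = α_D` the unique positive root of `z^D - z^(D-1) - ⋯ - z - 1`
and `d_D = (α - 1)/(2 + (D+1)(α - 2))`, the number of compositions of `t` with all parts
at most `D`, divided by `α^t`, tends to `d_D` as `t → ∞`. -/
theorem compCountLe_asymptotic (D : ℕ) (hD : 2 ≤ D) (α d : ℝ)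
    (hα : 0 < α) (hroot : α ^ D = ∑ i ∈ Finset.range D, α ^ i)
    (hd : d = (α - 1) / (2 + (D + 1) * (α - 2))) :
    Tendsto (fun t : ℕ => (compCountLe t D : ℝ) / α ^ t) atTop (nhds d) := by
  have hα1 : 1 < α := alpha_gt_one hD hα hroot
  have hβpos : (0:ℝ) < α⁻¹ := by positivity
  have hβlt : α⁻¹ < 1 := by rw [inv_lt_one_iff₀]; right; exact hα1
  set c : ℝ := α⁻¹ ^ (2 * D - 1) with hc
  have hcpos : 0 < c := by positivity
  have hcle : c ≤ 1 := pow_le_one₀ hβpos.le hβlt.le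
  -- window sequences shifted by 1
  set M' : ℕ → ℝ := fun t => Mwin D hD α (t + 1) with hM'
  set m' : ℕ → ℝ := fun t => mwin D hD α (t + 1) with hm'
  have hM'anti : Antitone M' := fun a b hab =>
    Mwin_anti hD hα hroot (by omega) (by omega)
  have hm'mono : Monotone m' := fun a b hab =>
    mwin_mono hD hα hroot (by omega) (by omega)
  have hmM : ∀ s t : ℕ, m' s ≤ M' t := by
    intro s t
    rcases le_total s t with h | h
    · exact le_trans (hm'mono h) (mwin_le_Mwin hD hα hroot _ (by omega))
    · exact le_trans (mwin_le_Mwin hD hα hroot _ (by omega)) (hM'anti h)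
  have hm'bdd : BddAbove (Set.range m') := ⟨M' 0, by
    rintro x ⟨t, rfl⟩; exact hmM t 0⟩
  have hM'bdd : BddBelow (Set.range M') := ⟨m' 0, by
    rintro x ⟨t, rfl⟩; exact hmM 0 t⟩
  have hmlim : Tendsto m' atTop (nhds (⨆ t, m' t)) := tendsto_atTop_ciSup hm'mono hm'bdd
  have hMlim : Tendsto M' atTop (nhds (⨅ t, M' t)) := tendsto_atTop_ciInf hM'anti hM'bdd
  set Lm := ⨆ t, m' t with hLmdef
  set LM := ⨅ t, M' t with hLMdef
  have hdiff : Tendsto (fun t => M' t - m' t) atTop (nhds (LM - Lm)) := hMlim.sub hmlim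
  -- contraction along multiples of D
  have hiter : ∀ i : ℕ, M' (i * D) - m' (i * D) ≤ (1 - c) ^ i * (M' 0 - m' 0) := by
    intro i
    induction i with
    | zero => simp
    | succ i ih =>
      have h1 := contraction hD hα hroot (i * D + 1) (by omega)
      have h2 : (i + 1) * D + 1 = i * D + 1 + D := by ring
      have h3 : (0:ℝ) ≤ 1 - c := by linarith
      calc M' ((i+1) * D) - m' ((i+1) * D)
          = Mwin D hD α (i * D + 1 + D) - mwin D hD α (i * D + 1 + D) := by
            rw [hM', hm']; simp only; rw [h2]
        _ ≤ (1 - c) * (Mwin D hD α (i * D + 1) - mwin D hD α (i * D + 1)) := h1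
        _ = (1 - c) * (M' (i * D) - m' (i * D)) := rfl
        _ ≤ (1 - c) * ((1 - c) ^ i * (M' 0 - m' 0)) := by
            exact mul_le_mul_of_nonneg_left ih h3
        _ = (1 - c) ^ (i + 1) * (M' 0 - m' 0) := by rw [pow_succ]; ring
  have hgeo : Tendsto (fun i : ℕ => (1 - c) ^ i * (M' 0 - m' 0)) atTop (nhds 0) := by
    have h0 : Tendsto (fun i : ℕ => (1 - c) ^ i) atTop (nhds 0) :=
      tendsto_pow_atTop_nhds_zero_of_lt_one (by linarith) (by linarith)
    simpa using h0.mul_const (M' 0 - m' 0)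
  have hsub0 : Tendsto (fun i : ℕ => M' (i * D) - m' (i * D)) atTop (nhds 0) := by
    apply squeeze_zero (fun i => by
      have := hmM (i * D) (i * D); linarith) hiter hgeo
  have hDmul : Tendsto (fun i : ℕ => i * D) atTop atTop :=
    tendsto_atTop_mono (fun i => le_mul_of_one_le_right (Nat.zero_le i) (by omega)) tendsto_id
  have hsub : Tendsto (fun i : ℕ => M' (i * D) - m' (i * D)) atTop (nhds (LM - Lm)) :=
    hdiff.comp hDmul
  have hLeq : LM = Lm := by
    have := tendsto_nhds_unique hsub hsub0
    linarith
  -- g converges to Lm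
  have hMlim' : Tendsto M' atTop (nhds Lm) := by rw [← hLeq]; exact hMlim
  have hsql : ∀ t : ℕ, m' t ≤ gseq D α (t + 1) := fun t =>
    (window_bounds hD hα hroot (t + 1) (by omega) (t + 1) le_rfl).1
  have hsqu : ∀ t : ℕ, gseq D α (t + 1) ≤ M' t := fun t =>
    (window_bounds hD hα hroot (t + 1) (by omega) (t + 1) le_rfl).2
  have hglim1 : Tendsto (fun t : ℕ => gseq D α (t + 1)) atTop (nhds Lm) :=
    tendsto_of_tendsto_of_tendsto_of_le_of_le hmlim hMlim' hsql hsqu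
  have hglim : Tendsto (gseq D α) atTop (nhds Lm) := (tendsto_add_atTop_iff_nat 1).1 hglim1
  -- y limit gives μ * Lm = 1
  set μ : ℝ := ∑ j ∈ range D, qcoef D α j with hμdef
  have hylim : Tendsto (fun n : ℕ => ∑ j ∈ range D, qcoef D α j * gseq D α (n - j))
      atTop (nhds (∑ j ∈ range D, qcoef D α j * Lm)) := by
    apply tendsto_finset_sum
    intro j _
    exact (hglim.comp (tendsto_sub_atTop_nat j)).const_mul _
  have hyone : Tendsto (fun n : ℕ => ∑ j ∈ range D, qcoef D α j * gseq D α (n - j))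
      atTop (nhds 1) := by
    refine Tendsto.congr' ?_ (tendsto_const_nhds (x := (1:ℝ)) (f := atTop))
    filter_upwards [eventually_ge_atTop D] with n hn
    exact (yconst hD hα hroot n hn).symm
  have hμL : μ * Lm = 1 := by
    have := tendsto_nhds_unique hylim hyone
    rw [← this, hμdef, Finset.sum_mul]
  have hμne : μ ≠ 0 := left_ne_zero_of_mul_eq_one hμL
  have hLm1μ : Lm = 1 / μ := eq_one_div_of_mul_eq_one_left (by rw [mul_comm]; exact hμL)
  -- identify d
  have hident := mu_identity hD hα hroot
  have hα1' : α - 1 ≠ 0 := sub_ne_zero.mpr (ne_of_gt hα1)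
  have hLmd : Lm = d := by
    rw [hLm1μ, hd, ← hident]
    field_simp
    rw [← hμdef]
    exact (div_self hμne).symm
  -- final transfer
  have hfin : ∀ t : ℕ, (compCountLe t D : ℝ) / α ^ t = gseq D α (t + D) := by
    intro t
    rw [gseq, if_neg (by omega), Nat.add_sub_cancel, inv_pow, div_eq_mul_inv]
  have hshift : Tendsto (fun t : ℕ => gseq D α (t + D)) atTop (nhds Lm) :=
    (tendsto_add_atTop_iff_nat D).2 hglim
  rw [← hLmd]
  exact hshift.congr (fun t => (hfin t).symm)
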